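/- arXiv:2202.01345 — 2 statements merged into one kernel-verified Lean document; each statement's English description precedes it below -/
import Mathlib

section
/- Let m_n ∈ 𝓜 (n ∈ ℕ) with m_n →^G 0, witnessed by an integer d ≥ 1 such that for every n, ∫_{(0,1]} (−1)^d G^d_{m_n}(x) dm_n(x) < ∞ (so that d ≥ max(d(m_n),1) and φ^d_{m_n} is defined). Then for every λ > 0, lim_{n→∞} c^d_{m_n}(λ) = 0. -/
open MeasureTheory Filter Topology Set
open scoped ENNReal NNReal

structure MString where
  m : ℝ → ℝ
  strict_mono : StrictMonoOn m (Set.Ioi 0)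
  right_cont : ∀ x : ℝ, 0 < x → ContinuousWithinAt m (Set.Ici x) x
  μ : Measure ℝ
  stieltjes : ∀ a b : ℝ, 0 < a → a ≤ b → μ (Set.Ioc a b) = ENNReal.ofReal (m b - m a)
  int_fin : ∫⁻ x in Set.Ioc (0:ℝ) 1, ENNReal.ofReal x ∂μ < ⊤

namespace MString

noncomputable def F (S : MString) (x : ℝ) : ℝ := ∫ y in Set.Ioc (0:ℝ) x, y ∂S.μ

noncomputable def E (S : MString) (d : ℕ) (lam x : ℝ) : ℝ :=
  (1 / (d.factorial : ℝ)) * (S.F x) ^ d * Real.exp (lam * S.F x)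

noncomputable def sBul (f : ℝ → ℝ) (x : ℝ) : ℝ := ∫ y in (0:ℝ)..x, f y

noncomputable def mBul (S : MString) (f : ℝ → ℝ) (x : ℝ) : ℝ :=
  ∫ y in Set.Ioc (0:ℝ) x, f y ∂S.μ

noncomputable def smIter (S : MString) : ℕ → (ℝ → ℝ) → ℝ → ℝ
  | 0, f => f
  | (k+1), f => sBul (mBul S (smIter S k f))

noncomputable def msIter (S : MString) : ℕ → (ℝ → ℝ) → ℝ → ℝ
  | 0, f => f
  | (k+1), f => mBul S (sBul (msIter S k f))

noncomputable def psi (S : MString) (lam x : ℝ) : ℝ :=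
  ∑' k : ℕ, lam ^ k * smIter S k id x

noncomputable def psiPlus (S : MString) (lam x : ℝ) : ℝ :=
  1 + ∑' k : ℕ, lam ^ (k + 1) * mBul S (smIter S k id) x

noncomputable def g (S : MString) (lam x : ℝ) : ℝ :=
  psi S lam x * ∫ y in Set.Ioi x, (psi S lam y ^ 2)⁻¹

noncomputable def mtilde (S : MString) (x : ℝ) : ℝ := S.m x - S.m 1

noncomputable def jInt (S : MString) (f : ℝ → ℝ) (y : ℝ) : ℝ :=
  if y ≤ 1 then ∫ z in Set.Ioc y 1, f z ∂S.μ else - ∫ z in Set.Ioc 1 y, f z ∂S.μ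

noncomputable def G (S : MString) : ℕ → ℝ → ℝ
  | 0 => fun _ => 0
  | 1 => fun x => ∫ y in (0:ℝ)..x, mtilde S y
  | (k+2) => fun x => - ∫ y in (0:ℝ)..x, jInt S (G S (k+1)) y

noncomputable def GBig (S : MString) (x : ℝ) : ℝ := ∫ y in (0:ℝ)..x, S.m y

noncomputable def intGdm (S : MString) (k : ℕ) : ℝ≥0∞ :=
  ∫⁻ x in Set.Ioc (0:ℝ) 1, ENNReal.ofReal ((-1 : ℝ) ^ k * G S k x) ∂S.μ

open scoped Classical in
noncomputable def dIdx (S : MString) : ℕ∞ :=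
  if BddBelow (S.m '' Set.Ioc (0:ℝ) 1) then 0
  else sInf {n : ℕ∞ | ∃ k : ℕ, n = (k : ℕ∞) ∧ 1 ≤ k ∧ intGdm S k < ⊤}

noncomputable def phi (S : MString) (d : ℕ) (lam x : ℝ) : ℝ :=
  1 + (∑ k ∈ Finset.Icc 1 d, lam ^ k * G S k x)
    + ∑' k : ℕ, lam ^ (d + k + 1) * smIter S (k + 1) (G S d) x

noncomputable def c (S : MString) (d : ℕ) (lam : ℝ) : ℝ :=
  (phi S d lam 1 - g S lam 1) / psi S lam 1

noncomputable def Sd (S : MString) (d : ℕ) (x : ℝ) : ℝ :=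
  sSup ((fun y => |mBul S (G S d) y|) '' Set.Icc 0 x)

end MString

/-!
Write `F(x) = ∫_{(0,x]} y dm(y)` and `q = λ F(x)`. Nonnegative nondecreasing functions with a
linear bound `B y` on `[0, a]` are mapped by `s•m•` to such functions with bound `B F(a) y`, so
the `k`-th terms of `ψ_m(λ; x)` and of the tail of `φ^d_m(λ; 1)` are at most `x q^k` and
`λ^(d+1) A q^k` with `A = ∫_{(0,1]} (-1)^d G^d dm`. Similarly `(-1)^k G^k` is nondecreasing on
`[0, 1]` with `0 ≤ (-1)^k G^k ≤ F(1)^k`, because `∫_0^1 dm((y, 1]) dy ≤ ∫_{(0,1]} z dm(z)`.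
Since `F_n(1) → 0` and `A_n → 0`, this gives `ψ_n(1) → 1` and `φ_n(1) → 1`; moreover
`F_n(y) ≤ F_n(1) + y (m_n(y) - m_n(1)) → 0` gives `ψ_n(y) → y` for `y > 1`, and dominated
convergence with `ψ(y) ≥ y` gives `∫_1^∞ ψ_n^{-2} → 1`, so `g_n(1) → 1` and `c_n → 0`.
-/

structure NonnegMonoLE (a : ℝ) (u b : ℝ → ℝ) : Prop where
  mono : MonotoneOn u (Icc 0 a)
  nonneg : ∀ x ∈ Icc 0 a, 0 ≤ u x
  le : ∀ x ∈ Icc 0 a, u x ≤ b x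

namespace NonnegMonoLE

variable {a C : ℝ} {u v b b' : ℝ → ℝ}

lemma congr (h : NonnegMonoLE a u b) (huv : EqOn u v (Icc 0 a)) : NonnegMonoLE a v b where
  mono := h.mono.congr huv
  nonneg x hx := huv hx ▸ h.nonneg x hx
  le x hx := huv hx ▸ h.le x hx

lemma bound_mono (h : NonnegMonoLE a u b) (hb : ∀ x ∈ Icc 0 a, b x ≤ b' x) :
    NonnegMonoLE a u b' :=
  ⟨h.mono, h.nonneg, fun x hx => (h.le x hx).trans (hb x hx)⟩

lemma abs_le (h : NonnegMonoLE a u b) {x : ℝ} (hx : x ∈ Icc 0 a) : |u x| ≤ b x :=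
  (abs_of_nonneg (h.nonneg x hx)).trans_le (h.le x hx)

lemma aemeasurable (h : NonnegMonoLE a u b) (μ : Measure ℝ) {s : Set ℝ} (hs : s ⊆ Icc 0 a) :
    AEMeasurable u (μ.restrict s) :=
  (aemeasurable_restrict_of_monotoneOn measurableSet_Icc h.mono).mono_measure
    (Measure.restrict_mono hs le_rfl)

lemma integrableOn_of_const (h : NonnegMonoLE a u fun _ => C) {μ : Measure ℝ} {s : Set ℝ}
    (hs : MeasurableSet s) (hsa : s ⊆ Icc 0 a) (hμs : μ s < ⊤) : IntegrableOn u s μ :=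
  Integrable.mono' (integrableOn_const hμs.ne) (h.aemeasurable μ hsa).aestronglyMeasurable <|
    ae_restrict_of_forall_mem hs fun x hx => h.abs_le (hsa hx)

end NonnegMonoLE

lemma nonnegMonoLE_setIntegral_Ioc {a : ℝ} {u : ℝ → ℝ} (ν : Measure ℝ)
    (hu0 : ∀ x ∈ Ioc 0 a, 0 ≤ u x) (hu : IntegrableOn u (Ioc 0 a) ν) :
    NonnegMonoLE a (fun x => ∫ y in Ioc 0 x, u y ∂ν) fun _ => ∫ y in Ioc 0 a, u y ∂ν where
  mono _ _ _ hy hxy := setIntegral_mono_set (hu.mono_set (Ioc_subset_Ioc_right hy.2))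
    (ae_restrict_of_forall_mem measurableSet_Ioc fun z hz => hu0 z ⟨hz.1, hz.2.trans hy.2⟩)
    (Ioc_subset_Ioc_right hxy).eventuallyLE
  nonneg _ hx := setIntegral_nonneg measurableSet_Ioc fun z hz => hu0 z ⟨hz.1, hz.2.trans hx.2⟩
  le _ hx := setIntegral_mono_set hu
    (ae_restrict_of_forall_mem measurableSet_Ioc hu0) (Ioc_subset_Ioc_right hx.2).eventuallyLE

lemma nonnegMonoLE_sBul {a : ℝ} {v : ℝ → ℝ} (hv0 : ∀ x ∈ Ioc 0 a, 0 ≤ v x)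
    (hv : IntegrableOn v (Ioc 0 a)) :
    NonnegMonoLE a (MString.sBul v) fun _ => ∫ y in Ioc 0 a, v y :=
  (nonnegMonoLE_setIntegral_Ioc volume hv0 hv).congr fun _ hx =>
    (intervalIntegral.integral_of_le hx.1).symm

lemma NonnegMonoLE.sBul {a C : ℝ} {v : ℝ → ℝ} (h : NonnegMonoLE a v fun _ => C) :
    NonnegMonoLE a (MString.sBul v) fun x => C * x := by
  have hv : IntegrableOn v (Ioc 0 a) :=
    h.integrableOn_of_const measurableSet_Ioc Ioc_subset_Icc_self measure_Ioc_lt_top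
  have H := nonnegMonoLE_sBul (fun x hx => h.nonneg x (Ioc_subset_Icc_self hx)) hv
  refine ⟨H.mono, H.nonneg, fun x hx => ?_⟩
  calc MString.sBul v x = ∫ y in Ioc 0 x, v y := intervalIntegral.integral_of_le hx.1
    _ ≤ ∫ _ in Ioc 0 x, C :=
      setIntegral_mono_on (hv.mono_set (Ioc_subset_Ioc_right hx.2))
        (integrableOn_const measure_Ioc_lt_top.ne) measurableSet_Ioc
        fun y hy => h.le y ⟨hy.1.le, hy.2.trans hx.2⟩
    _ = C * x := by simp [hx.1, mul_comm]

lemma tendsto_tsum_of_abs_le_geometric {ι : Type*} {l : Filter ι} {a : ι → ℕ → ℝ}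
    {C q : ι → ℝ} (hC : Tendsto C l (𝓝 0)) (hq : Tendsto q l (𝓝 0))
    (hq0 : ∀ᶠ i in l, 0 ≤ q i) (ha : ∀ᶠ i in l, ∀ k, |a i k| ≤ C i * q i ^ k) :
    Tendsto (fun i => ∑' k, a i k) l (𝓝 0) := by
  have hlim : Tendsto (fun i => C i * (1 - q i)⁻¹) l (𝓝 0) := by
    simpa using hC.mul ((tendsto_const_nhds.sub hq).inv₀ (by norm_num))
  refine squeeze_zero_norm' ?_ hlim
  filter_upwards [ha, hq0, hq.eventually (gt_mem_nhds one_pos)] with i hai hq0i hq1i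
  exact tsum_of_norm_bounded ((hasSum_geometric_of_lt_one hq0i hq1i).mul_left (C i))
    fun k => (Real.norm_eq_abs _).trans_le (hai k)

lemma rpow_neg_two_eqOn_inv_sq :
    EqOn (fun y : ℝ => y ^ (-2 : ℝ)) (fun y => (y ^ 2)⁻¹) (Ioi 0) :=
  fun y hy => by simp [Real.rpow_neg (le_of_lt hy)]

lemma integrableOn_Ioi_one_inv_sq : IntegrableOn (fun y : ℝ => (y ^ 2)⁻¹) (Ioi 1) :=
  (integrableOn_Ioi_rpow_of_lt (by norm_num) one_pos).congr_fun
    (rpow_neg_two_eqOn_inv_sq.mono (Ioi_subset_Ioi zero_le_one)) measurableSet_Ioi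

lemma integral_Ioi_one_inv_sq : ∫ y in Ioi (1 : ℝ), (y ^ 2)⁻¹ = 1 := by
  rw [← setIntegral_congr_fun measurableSet_Ioi
    (rpow_neg_two_eqOn_inv_sq.mono (Ioi_subset_Ioi zero_le_one)),
    integral_Ioi_rpow_of_lt (by norm_num) one_pos]
  norm_num

namespace MString

variable (S : MString)

lemma measure_Ioc_lt_top {a b : ℝ} (ha : 0 < a) : S.μ (Ioc a b) < ⊤ := by
  rcases le_or_gt a b with hab | hab
  · rw [S.stieltjes a b ha hab]; exact ENNReal.ofReal_lt_top
  · simp [Ioc_eq_empty_of_le hab.le]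

lemma measureReal_Ioc {a b : ℝ} (ha : 0 < a) (hab : a ≤ b) :
    S.μ.real (Ioc a b) = S.m b - S.m a := by
  rw [measureReal_def, S.stieltjes a b ha hab, ENNReal.toReal_ofReal]
  exact sub_nonneg.2 (S.strict_mono.monotoneOn ha (ha.trans_le hab) hab)

lemma integrableOn_id (x : ℝ) : IntegrableOn (fun y => y) (Ioc 0 x) S.μ := by
  have h01 : IntegrableOn (fun y => y) (Ioc 0 1) S.μ :=
    ⟨measurable_id.aestronglyMeasurable, (hasFiniteIntegral_iff_ofReal
      (ae_restrict_of_forall_mem measurableSet_Ioc fun y hy => hy.1.le)).2 S.int_fin⟩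
  have h1x : IntegrableOn (fun y => y) (Ioc 1 x) S.μ :=
    Integrable.mono' (integrableOn_const (S.measure_Ioc_lt_top one_pos).ne (C := x))
      measurable_id.aestronglyMeasurable <| ae_restrict_of_forall_mem measurableSet_Ioc
        fun y hy => (abs_of_pos (one_pos.trans hy.1)).trans_le hy.2
  exact (h01.union h1x).mono_set Ioc_subset_Ioc_union_Ioc

lemma F_nonneg (x : ℝ) : 0 ≤ S.F x :=
  setIntegral_nonneg measurableSet_Ioc fun _ hy => hy.1.le

lemma F_le_of_one_le {y : ℝ} (hy : 1 ≤ y) : S.F y ≤ S.F 1 + y * (S.m y - S.m 1) := by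
  have h1y : IntegrableOn (fun z => z) (Ioc 1 y) S.μ :=
    (S.integrableOn_id y).mono_set (Ioc_subset_Ioc_left zero_le_one)
  rw [F, F, ← Ioc_union_Ioc_eq_Ioc zero_le_one hy,
    setIntegral_union (Ioc_disjoint_Ioc_of_le le_rfl) measurableSet_Ioc (S.integrableOn_id 1) h1y,
    ← S.measureReal_Ioc one_pos hy, mul_comm, ← smul_eq_mul, ← setIntegral_const]
  exact add_le_add le_rfl (setIntegral_mono_on h1y
    (integrableOn_const (S.measure_Ioc_lt_top one_pos).ne) measurableSet_Ioc fun z hz => hz.2)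

lemma lintegral_measure_Ioc_one_le :
    ∫⁻ t in Ioc 0 1, S.μ (Ioc t 1) ≤ ∫⁻ z in Ioc 0 1, ENNReal.ofReal z ∂S.μ := by
  rw [lintegral_eq_lintegral_meas_lt (S.μ.restrict (Ioc 0 1)) (f := fun z => z)
    (ae_restrict_of_forall_mem measurableSet_Ioc fun z hz => hz.1.le) aemeasurable_id]
  calc ∫⁻ t in Ioc 0 1, S.μ (Ioc t 1)
      = ∫⁻ t in Ioc 0 1, S.μ.restrict (Ioc 0 1) {z | t < z} := by
        refine setLIntegral_congr_fun measurableSet_Ioc fun t ht => ?_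
        rw [Measure.restrict_apply' measurableSet_Ioc]
        congr 1
        ext z
        simp only [mem_Ioc, mem_inter_iff, mem_ofPred_eq]
        exact ⟨fun h => ⟨h.1, ht.1.trans h.1, h.2⟩, fun h => ⟨h.1, h.2.2⟩⟩
    _ ≤ _ := lintegral_mono_set Ioc_subset_Ioi_self

lemma integrableOn_measureReal_Ioc_one :
    IntegrableOn (fun t => S.μ.real (Ioc t 1)) (Ioc 0 1) := by
  have hanti : AntitoneOn (fun t => S.μ.real (Ioc t 1)) (Ioc 0 1) := fun s hs _ _ hst =>
    measureReal_mono (Ioc_subset_Ioc_left hst) (S.measure_Ioc_lt_top hs.1).ne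
  refine ⟨(aemeasurable_restrict_of_antitoneOn measurableSet_Ioc hanti).aestronglyMeasurable,
    (hasFiniteIntegral_iff_ofReal
      (ae_restrict_of_forall_mem measurableSet_Ioc fun _ _ => measureReal_nonneg)).2 ?_⟩
  calc ∫⁻ t in Ioc 0 1, ENNReal.ofReal (S.μ.real (Ioc t 1))
      ≤ ∫⁻ t in Ioc 0 1, S.μ (Ioc t 1) := lintegral_mono fun _ => ENNReal.ofReal_toReal_le
    _ < ⊤ := S.lintegral_measure_Ioc_one_le.trans_lt S.int_fin

lemma setIntegral_measureReal_Ioc_one_le : ∫ t in Ioc 0 1, S.μ.real (Ioc t 1) ≤ S.F 1 := by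
  have hF : S.F 1 = (∫⁻ z in Ioc 0 1, ENNReal.ofReal z ∂S.μ).toReal :=
    integral_eq_lintegral_of_nonneg_ae
      (ae_restrict_of_forall_mem measurableSet_Ioc fun z hz => hz.1.le)
      measurable_id.aestronglyMeasurable
  rw [integral_eq_lintegral_of_nonneg_ae
    (ae_restrict_of_forall_mem measurableSet_Ioc fun _ _ => measureReal_nonneg)
    S.integrableOn_measureReal_Ioc_one.aestronglyMeasurable, hF]
  refine ENNReal.toReal_mono S.int_fin.ne ?_
  calc ∫⁻ t in Ioc 0 1, ENNReal.ofReal (S.μ.real (Ioc t 1))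
      ≤ ∫⁻ t in Ioc 0 1, S.μ (Ioc t 1) := lintegral_mono fun _ => ENNReal.ofReal_toReal_le
    _ ≤ _ := S.lintegral_measure_Ioc_one_le

end MString

namespace NonnegMonoLE

variable {a B C : ℝ} {u f : ℝ → ℝ} (S : MString)

lemma integrableOn_of_linear (h : NonnegMonoLE a u fun x => B * x) :
    IntegrableOn u (Ioc 0 a) S.μ :=
  Integrable.mono' ((S.integrableOn_id a).const_mul B)
    (h.aemeasurable _ Ioc_subset_Icc_self).aestronglyMeasurable <|
    ae_restrict_of_forall_mem measurableSet_Ioc fun _ hx => h.abs_le (Ioc_subset_Icc_self hx)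

lemma setIntegral_le_of_linear (h : NonnegMonoLE a u fun x => B * x) :
    ∫ y in Ioc 0 a, u y ∂S.μ ≤ B * S.F a :=
  (setIntegral_mono_on (h.integrableOn_of_linear S) ((S.integrableOn_id a).const_mul B)
    measurableSet_Ioc fun x hx => h.le x (Ioc_subset_Icc_self hx)).trans_eq
    (integral_const_mul B _)

lemma sBul_mBul (h : NonnegMonoLE a u fun x => B * x) :
    NonnegMonoLE a (MString.sBul (S.mBul u)) fun x => B * S.F a * x :=
  ((nonnegMonoLE_setIntegral_Ioc S.μ (fun x hx => h.nonneg x (Ioc_subset_Icc_self hx))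
    (h.integrableOn_of_linear S)).bound_mono fun _ _ => h.setIntegral_le_of_linear S).sBul

lemma smIter (h : NonnegMonoLE a u fun x => B * x) (k : ℕ) :
    NonnegMonoLE a (S.smIter k u) fun x => B * S.F a ^ k * x := by
  induction k with
  | zero => simpa [MString.smIter] using h
  | succ k ih => exact (ih.sBul_mBul S).bound_mono fun x _ => le_of_eq (by ring)

lemma sBul_jInt (hf : NonnegMonoLE 1 f fun _ => C) :
    NonnegMonoLE 1 (MString.sBul (S.jInt f)) fun _ => C * S.F 1 := by
  have hsub {y : ℝ} (hy : y ∈ Ioc 0 1) : Ioc y 1 ⊆ Icc 0 1 := fun z hz =>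
    ⟨(hy.1.trans hz.1).le, hz.2⟩
  have hf_int {y : ℝ} (hy : y ∈ Ioc 0 1) : IntegrableOn f (Ioc y 1) S.μ :=
    hf.integrableOn_of_const measurableSet_Ioc (hsub hy) (S.measure_Ioc_lt_top hy.1)
  have hJ {y : ℝ} (hy : y ∈ Ioc 0 1) : S.jInt f y = ∫ z in Ioc y 1, f z ∂S.μ := if_pos hy.2
  have hJ0 : ∀ y ∈ Ioc 0 1, 0 ≤ S.jInt f y := fun y hy => (hJ hy).symm ▸
    setIntegral_nonneg measurableSet_Ioc fun z hz => hf.nonneg z (hsub hy hz)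
  have hJw {y : ℝ} (hy : y ∈ Ioc 0 1) : S.jInt f y ≤ C * S.μ.real (Ioc y 1) := by
    rw [hJ hy, mul_comm, ← smul_eq_mul, ← setIntegral_const]
    exact setIntegral_mono_on (hf_int hy)
      (integrableOn_const (S.measure_Ioc_lt_top hy.1).ne) measurableSet_Ioc
      fun z hz => hf.le z (hsub hy hz)
  have hJanti : AntitoneOn (S.jInt f) (Ioc 0 1) := fun y hy y' hy' hyy' => by
    rw [hJ hy, hJ hy']
    exact setIntegral_mono_set (hf_int hy)
      (ae_restrict_of_forall_mem measurableSet_Ioc fun z hz => hf.nonneg z (hsub hy hz))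
      (Ioc_subset_Ioc_left hyy').eventuallyLE
  have hJint : IntegrableOn (S.jInt f) (Ioc 0 1) :=
    Integrable.mono' (S.integrableOn_measureReal_Ioc_one.const_mul C)
      (aemeasurable_restrict_of_antitoneOn measurableSet_Ioc hJanti).aestronglyMeasurable <|
      ae_restrict_of_forall_mem measurableSet_Ioc fun y hy =>
        (abs_of_nonneg (hJ0 y hy)).trans_le (hJw hy)
  have hC : 0 ≤ C := (hf.abs_le ⟨le_rfl, zero_le_one⟩).trans' (abs_nonneg _)
  refine (nonnegMonoLE_sBul hJ0 hJint).bound_mono fun _ _ => ?_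
  calc ∫ y in Ioc 0 1, S.jInt f y
      ≤ ∫ y in Ioc 0 1, C * S.μ.real (Ioc y 1) :=
        setIntegral_mono_on hJint (S.integrableOn_measureReal_Ioc_one.const_mul C)
          measurableSet_Ioc fun y hy => hJw hy
    _ = C * ∫ y in Ioc 0 1, S.μ.real (Ioc y 1) := integral_const_mul C _
    _ ≤ C * S.F 1 := mul_le_mul_of_nonneg_left S.setIntegral_measureReal_Ioc_one_le hC

end NonnegMonoLE

namespace MString

variable (S : MString)

lemma jInt_const_mul (c : ℝ) (f : ℝ → ℝ) :
    S.jInt (fun z => c * f z) = fun y => c * S.jInt f y := by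
  funext y
  simp only [jInt, integral_const_mul]
  split_ifs <;> ring

lemma neg_one_pow_mul_G_one :
    EqOn (fun x => (-1) ^ 1 * S.G 1 x) (sBul (S.jInt fun _ => 1)) (Icc 0 1) := by
  intro x hx
  simp only [G, sBul, pow_one, neg_one_mul, ← intervalIntegral.integral_neg]
  refine intervalIntegral.integral_congr_ae (ae_of_all _ fun y hy => ?_)
  rw [uIoc_of_le hx.1] at hy
  rw [jInt, if_pos (hy.2.trans hx.2), setIntegral_const, smul_eq_mul, mul_one,
    S.measureReal_Ioc hy.1 (hy.2.trans hx.2), mtilde]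
  ring

lemma neg_one_pow_mul_G_add_two (k : ℕ) :
    (fun x => (-1) ^ (k + 2) * S.G (k + 2) x) =
      sBul (S.jInt fun z => (-1) ^ (k + 1) * S.G (k + 1) z) := by
  funext x
  rw [jInt_const_mul, sBul, intervalIntegral.integral_const_mul, G, pow_succ]
  ring

lemma nonnegMonoLE_G :
    ∀ k : ℕ, NonnegMonoLE 1 (fun x => (-1) ^ k * S.G k x) fun _ => S.F 1 ^ k
  | 0 => by simpa [G] using (⟨monotoneOn_const, fun _ _ => le_rfl, fun _ _ => zero_le_one⟩ :
      NonnegMonoLE 1 (fun _ => (0 : ℝ)) fun _ => 1)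
  | 1 => by
    have h1 : NonnegMonoLE 1 (fun _ => (1 : ℝ)) fun _ => 1 :=
      ⟨monotoneOn_const, fun _ _ => zero_le_one, fun _ _ => le_rfl⟩
    simpa using (h1.sBul_jInt S).congr S.neg_one_pow_mul_G_one.symm
  | k + 2 => by
    rw [neg_one_pow_mul_G_add_two]
    exact ((nonnegMonoLE_G (k + 1)).sBul_jInt S).bound_mono fun _ _ => (pow_succ _ _).ge

lemma abs_G_one_le (k : ℕ) : |S.G k 1| ≤ S.F 1 ^ k := by
  simpa using (S.nonnegMonoLE_G k).abs_le ⟨zero_le_one, le_rfl⟩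

lemma smIter_const_mul (c : ℝ) (f : ℝ → ℝ) (k : ℕ) :
    S.smIter k (fun z => c * f z) = fun x => c * S.smIter k f x := by
  induction k with
  | zero => rfl
  | succ k ih =>
    funext x
    simp only [smIter, ih, sBul, mBul, integral_const_mul, intervalIntegral.integral_const_mul]

lemma smIter_succ' (f : ℝ → ℝ) (k : ℕ) :
    S.smIter (k + 1) f = S.smIter k (S.smIter 1 f) := by
  induction k with
  | zero => rfl
  | succ k ih => rw [smIter, ih]; rfl

lemma abs_smIter_G_le {d : ℕ} (hfin : S.intGdm d < ⊤) (k : ℕ) :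
    |S.smIter (k + 1) (S.G d) 1| ≤ (S.intGdm d).toReal * S.F 1 ^ k := by
  set f := fun z => (-1) ^ d * S.G d z
  have hf := S.nonnegMonoLE_G d
  have hf0 : ∀ z ∈ Ioc 0 1, 0 ≤ f z := fun z hz => hf.nonneg z (Ioc_subset_Icc_self hz)
  have hf_int : IntegrableOn f (Ioc 0 1) S.μ :=
    ⟨(hf.aemeasurable _ Ioc_subset_Icc_self).aestronglyMeasurable,
      (hasFiniteIntegral_iff_ofReal (ae_restrict_of_forall_mem measurableSet_Ioc hf0)).2 hfin⟩
  have hf_eq : ∫ z in Ioc 0 1, f z ∂S.μ = (S.intGdm d).toReal :=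
    integral_eq_lintegral_of_nonneg_ae (ae_restrict_of_forall_mem measurableSet_Ioc hf0)
      hf_int.aestronglyMeasurable
  have h1 : NonnegMonoLE 1 (S.smIter 1 f) fun x => (S.intGdm d).toReal * x :=
    hf_eq ▸ (nonnegMonoLE_setIntegral_Ioc S.μ hf0 hf_int).sBul
  have hk := (h1.smIter S k).abs_le ⟨zero_le_one, le_rfl⟩
  rwa [← smIter_succ', smIter_const_mul, abs_mul, abs_pow, abs_neg, abs_one, one_pow, one_mul,
    mul_one] at hk

lemma nonnegMonoLE_smIter_id (x : ℝ) (k : ℕ) :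
    NonnegMonoLE x (S.smIter k id) fun y => S.F x ^ k * y := by
  have h : NonnegMonoLE x id fun y => 1 * y :=
    ⟨monotoneOn_id, fun _ hy => hy.1, fun _ _ => (one_mul _).ge⟩
  simpa using h.smIter S k

lemma psi_term_nonneg {lam y : ℝ} (hlam : 0 ≤ lam) (hy : 0 ≤ y) (k : ℕ) :
    0 ≤ lam ^ k * S.smIter k id y :=
  mul_nonneg (pow_nonneg hlam k) ((S.nonnegMonoLE_smIter_id y k).nonneg y ⟨hy, le_rfl⟩)

lemma abs_psi_term_le {lam y : ℝ} (hlam : 0 ≤ lam) (hy : 0 ≤ y) (k : ℕ) :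
    |lam ^ k * S.smIter k id y| ≤ y * (lam * S.F y) ^ k := by
  rw [abs_of_nonneg (S.psi_term_nonneg hlam hy k), mul_pow, mul_left_comm]
  exact mul_le_mul_of_nonneg_left
    (((S.nonnegMonoLE_smIter_id y k).le y ⟨hy, le_rfl⟩).trans_eq (mul_comm _ _))
    (pow_nonneg hlam k)

lemma psi_sub_self {lam y : ℝ} (hlam : 0 ≤ lam) (hy : 0 ≤ y) (hq : lam * S.F y < 1) :
    S.psi lam y - y = ∑' k, lam ^ (k + 1) * S.smIter (k + 1) id y := by
  have hgeom := (summable_geometric_of_lt_one (mul_nonneg hlam (S.F_nonneg y)) hq).mul_left y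
  have hsum : Summable fun k => lam ^ k * S.smIter k id y :=
    .of_norm_bounded hgeom fun k => (Real.norm_eq_abs _).trans_le (S.abs_psi_term_le hlam hy k)
  rw [psi, hsum.tsum_eq_zero_add]
  simp [smIter]

lemma inv_sq_psi_le {lam y : ℝ} (hlam : 0 ≤ lam) (hy : 0 < y) :
    (S.psi lam y ^ 2)⁻¹ ≤ (y ^ 2)⁻¹ := by
  by_cases hsum : Summable fun k => lam ^ k * S.smIter k id y
  · have hle : y ≤ S.psi lam y := by
      simpa [psi, smIter] using hsum.le_tsum 0 fun k _ => S.psi_term_nonneg hlam hy.le k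
    exact inv_anti₀ (by positivity) (pow_le_pow_left₀ hy.le hle 2)
  -- a divergent series has `tsum` equal to `0`, and `0⁻¹ = 0`
  · simp [psi, tsum_eq_zero_of_not_summable hsum, hy.le]

lemma aemeasurable_psi (lam : ℝ) : AEMeasurable (S.psi lam) (volume.restrict (Ioi 0)) := by
  have hmono (k : ℕ) : MonotoneOn (S.smIter k id) (Ioi 0) := fun x hx y hy hxy =>
    (S.nonnegMonoLE_smIter_id y k).mono ⟨hx.le, hxy⟩ ⟨hy.le, le_rfl⟩ hxy
  exact AEMeasurable.tsum fun k =>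
    (aemeasurable_restrict_of_monotoneOn measurableSet_Ioi (hmono k)).const_mul _

end MString

namespace MString

variable {Sn : ℕ → MString} {lam : ℝ}

lemma tendsto_psi (hlam : 0 ≤ lam) {y : ℝ} (hy : 0 ≤ y)
    (hF : Tendsto (fun n => (Sn n).F y) atTop (𝓝 0)) :
    Tendsto (fun n => (Sn n).psi lam y) atTop (𝓝 y) := by
  have hq : Tendsto (fun n => lam * (Sn n).F y) atTop (𝓝 0) := by simpa using hF.const_mul lam
  have htail := tendsto_tsum_of_abs_le_geometric (by simpa using hq.const_mul y) hq
    (.of_forall fun n => mul_nonneg hlam ((Sn n).F_nonneg y))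
    (.of_forall fun n k => ((Sn n).abs_psi_term_le hlam hy (k + 1)).trans_eq (by ring))
  rw [← tendsto_sub_nhds_zero_iff]
  refine htail.congr' ?_
  filter_upwards [hq.eventually (gt_mem_nhds one_pos)] with n hn
  exact ((Sn n).psi_sub_self hlam hy hn).symm

lemma tendsto_F_of_one_le (hm : ∀ x : ℝ, 0 < x → Tendsto (fun n => (Sn n).m x) atTop (𝓝 0))
    (hint : Tendsto (fun n => (Sn n).F 1) atTop (𝓝 0)) {y : ℝ} (hy : 1 ≤ y) :
    Tendsto (fun n => (Sn n).F y) atTop (𝓝 0) :=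
  squeeze_zero (fun n => (Sn n).F_nonneg y) (fun n => (Sn n).F_le_of_one_le hy) <| by
    simpa using hint.add (((hm y (one_pos.trans_le hy)).sub (hm 1 one_pos)).const_mul y)

lemma tendsto_setIntegral_Ioi_inv_sq_psi (hlam : 0 ≤ lam)
    (hpsi : ∀ y, 1 < y → Tendsto (fun n => (Sn n).psi lam y) atTop (𝓝 y)) :
    Tendsto (fun n => ∫ y in Ioi 1, ((Sn n).psi lam y ^ 2)⁻¹) atTop (𝓝 1) := by
  have hmeas (n : ℕ) : AEMeasurable ((Sn n).psi lam) (volume.restrict (Ioi 1)) :=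
    ((Sn n).aemeasurable_psi lam).mono_measure
      (Measure.restrict_mono (Ioi_subset_Ioi zero_le_one) le_rfl)
  have h := tendsto_integral_of_dominated_convergence (fun y => (y ^ 2)⁻¹)
    (fun n => ((hmeas n).pow_const 2).inv.aestronglyMeasurable) integrableOn_Ioi_one_inv_sq
    (fun n => ae_restrict_of_forall_mem measurableSet_Ioi fun y hy =>
      (Real.norm_of_nonneg (inv_nonneg.2 (sq_nonneg _))).trans_le
        ((Sn n).inv_sq_psi_le hlam (one_pos.trans hy)))
    (ae_restrict_of_forall_mem measurableSet_Ioi fun y hy =>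
      ((hpsi y hy).pow 2).inv₀ (pow_ne_zero 2 (one_pos.trans hy).ne'))
  rwa [integral_Ioi_one_inv_sq] at h

lemma tendsto_g_one (hm : ∀ x : ℝ, 0 < x → Tendsto (fun n => (Sn n).m x) atTop (𝓝 0))
    (hint : Tendsto (fun n => (Sn n).F 1) atTop (𝓝 0)) (hlam : 0 ≤ lam) :
    Tendsto (fun n => (Sn n).g lam 1) atTop (𝓝 1) := by
  have h := (tendsto_psi hlam zero_le_one hint).mul
    (tendsto_setIntegral_Ioi_inv_sq_psi hlam fun y hy =>
      tendsto_psi hlam (zero_le_one.trans hy.le) (tendsto_F_of_one_le hm hint hy.le))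
  rwa [mul_one] at h

lemma tendsto_phi_tail_one {d : ℕ} (hint : Tendsto (fun n => (Sn n).F 1) atTop (𝓝 0))
    (hG : Tendsto (fun n => (Sn n).intGdm d) atTop (𝓝 0)) (hlam : 0 ≤ lam) :
    Tendsto (fun n => ∑' k, lam ^ (d + k + 1) * (Sn n).smIter (k + 1) ((Sn n).G d) 1)
      atTop (𝓝 0) := by
  have hA : Tendsto (fun n => lam ^ (d + 1) * ((Sn n).intGdm d).toReal) atTop (𝓝 0) := by
    simpa using ((ENNReal.tendsto_toReal ENNReal.zero_ne_top).comp hG).const_mul (lam ^ (d + 1))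
  refine tendsto_tsum_of_abs_le_geometric hA (q := fun n => lam * (Sn n).F 1)
    (by simpa using hint.const_mul lam) (.of_forall fun n => mul_nonneg hlam ((Sn n).F_nonneg 1))
    ?_
  filter_upwards [hG.eventually (gt_mem_nhds ENNReal.zero_lt_top)] with n hn k
  rw [abs_mul, abs_of_nonneg (pow_nonneg hlam _)]
  calc lam ^ (d + k + 1) * |(Sn n).smIter (k + 1) ((Sn n).G d) 1|
      ≤ lam ^ (d + k + 1) * (((Sn n).intGdm d).toReal * (Sn n).F 1 ^ k) :=
        mul_le_mul_of_nonneg_left ((Sn n).abs_smIter_G_le hn k) (pow_nonneg hlam _)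
    _ = lam ^ (d + 1) * ((Sn n).intGdm d).toReal * (lam * (Sn n).F 1) ^ k := by ring

lemma tendsto_phi_one {d : ℕ} (hint : Tendsto (fun n => (Sn n).F 1) atTop (𝓝 0))
    (hG : Tendsto (fun n => (Sn n).intGdm d) atTop (𝓝 0)) (hlam : 0 ≤ lam) :
    Tendsto (fun n => (Sn n).phi d lam 1) atTop (𝓝 1) := by
  have hsum :
      Tendsto (fun n => ∑ k ∈ Finset.Icc 1 d, lam ^ k * (Sn n).G k 1) atTop (𝓝 0) := by
    rw [← Finset.sum_const_zero (s := Finset.Icc 1 d)]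
    refine tendsto_finsetSum _ fun k hk =>
      squeeze_zero_norm (a := fun n => lam ^ k * (Sn n).F 1 ^ k) (fun n => ?_) ?_
    · rw [Real.norm_eq_abs, abs_mul, abs_of_nonneg (pow_nonneg hlam k)]
      exact mul_le_mul_of_nonneg_left ((Sn n).abs_G_one_le k) (pow_nonneg hlam k)
    · have hk0 : k ≠ 0 := Nat.one_le_iff_ne_zero.1 (Finset.mem_Icc.1 hk).1
      simpa [zero_pow hk0] using (hint.pow k).const_mul (lam ^ k)
  have h := (hsum.const_add 1).add (tendsto_phi_tail_one hint hG hlam)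
  rwa [add_zero, add_zero] at h

end MString

theorem stmt15_general (Sn : ℕ → MString) (d : ℕ)
    (hm : ∀ x : ℝ, 0 < x → Tendsto (fun n => (Sn n).m x) atTop (nhds 0))
    (hint : Tendsto (fun n => MString.F (Sn n) 1) atTop (nhds 0))
    (hG : Tendsto (fun n => MString.intGdm (Sn n) d) atTop (nhds 0)) :
    ∀ lam : ℝ, 0 < lam →
      Tendsto (fun n => MString.c (Sn n) d lam) atTop (nhds 0) := by
  intro lam hlam
  have h := ((MString.tendsto_phi_one hint hG hlam.le).sub
    (MString.tendsto_g_one hm hint hlam.le)).div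
    (MString.tendsto_psi hlam.le zero_le_one hint) one_ne_zero
  rwa [sub_self, zero_div] at h

theorem stmt15 (Sn : ℕ → MString) (d : ℕ) (hd : 1 ≤ d)
    (hm : ∀ x : ℝ, 0 < x → Tendsto (fun n => (Sn n).m x) atTop (nhds 0))
    (hint : Tendsto (fun n => MString.F (Sn n) 1) atTop (nhds 0))
    (hGfin : ∀ n, MString.intGdm (Sn n) d < ⊤)
    (hG : Tendsto (fun n => MString.intGdm (Sn n) d) atTop (nhds 0)) :
    ∀ lam : ℝ, 0 < lam →
      Tendsto (fun n => MString.c (Sn n) d lam) atTop (nhds 0) :=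
  stmt15_general Sn d hm hint hG
end

section
/- Let α ≥ 2, let K and L be slowly varying at ∞, and let m and j be Borel measures on (0,∞) such that m(x,∞) < ∞ and j(x,∞) < ∞ for every x > 0, ∫_0^1 m(w,∞) dw < ∞, j(1,∞) < ∞, ∫_{(0,1]} x j(dx) < ∞ and ∫_{(0,1]} (∫_0^x m(y,∞) dy) j(dx) < ∞. Assume m(x,∞) ∼ (α−1)^{−1} x^{1/α − 1} K(x) and j(x,∞) ∼ x^{−2/α} L(x) as x → ∞, and that N(γ) → ∞ as γ → ∞. Then lim_{γ→∞} K(γ)² L(γ) / N(γ) = 0. -/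
open MeasureTheory Filter Topology Set
open scoped ENNReal NNReal

def SlowlyVarying (ℓ : ℝ → ℝ) : Prop :=
  ∀ c : ℝ, 0 < c → Tendsto (fun x => ℓ (c * x) / ℓ x) atTop (nhds 1)

noncomputable def mTail (m : Measure ℝ) (x : ℝ) : ℝ := (m (Set.Ioi x)).toReal

noncomputable def NN (m j : Measure ℝ) (γ : ℝ) : ℝ :=
  ∫ x in Set.Ioc (0:ℝ) γ,
    (∫ y in (0:ℝ)..x,
      (∫ z in Set.Ioc y γ, (∫ w in (0:ℝ)..z, mTail m w) ∂m)) ∂j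

/-!
Cutting the three inner integrals of `N(γ)` down to `y ∈ (a, 2a]`, `z ∈ (2a, 4a]` and using
`∫_0^z m(w,∞) dw ≥ z m(z,∞)` shows that the range `x ∈ (4a, 8a]` contributes at least
`blockBound m j a = a · 2a m(2a,∞) · m(2a,4a] · j(4a,8a]` to `N(γ)`. For `a = uγ` the regular
variation of the tails makes this `∼ κ u^(2+2p+q) K(γ)² L(γ)` with `p = 1/α - 1`, `q = -2/α`.
Since `2 + 2p + q = 0`, each of the disjoint ranges `u = 2^(-k)/8`, `k < M`, contributes at least
`κ/2 · K(γ)² L(γ)` for large `γ`, so `N(γ) / (K(γ)² L(γ)) → ∞`.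
-/
section Integrability

variable {μ : Measure ℝ} {f : ℝ → ℝ} {a b : ℝ}

lemma integrableOn_Ioc_of_monotoneOn (hf : MonotoneOn f (Icc a b)) (hμ : μ (Ioc a b) ≠ ⊤) :
    IntegrableOn f (Ioc a b) μ := by
  have hmeas : AEStronglyMeasurable f (μ.restrict (Ioc a b)) :=
    (aemeasurable_restrict_of_monotoneOn measurableSet_Ioc
      (hf.mono Ioc_subset_Icc_self)).aestronglyMeasurable
  refine integrable_of_le_of_le (g₁ := fun _ => f a) (g₂ := fun _ => f b) hmeas ?_ ?_
    (integrableOn_const hμ) (integrableOn_const hμ)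
  all_goals
    filter_upwards [ae_restrict_mem measurableSet_Ioc] with x hx
    have hab : a ≤ b := hx.1.le.trans hx.2
    have hx' := Ioc_subset_Icc_self hx
  · exact hf (left_mem_Icc.2 hab) hx' hx'.1
  · exact hf hx' (right_mem_Icc.2 hab) hx'.2

lemma integrableOn_Ioc_of_antitoneOn (hf : AntitoneOn f (Icc a b)) (hμ : μ (Ioc a b) ≠ ⊤) :
    IntegrableOn f (Ioc a b) μ := by
  simpa using (integrableOn_Ioc_of_monotoneOn hf.neg hμ).neg

lemma integrableOn_Ioc_zero_of_Ioc_one {T : ℝ} (h₀ : IntegrableOn f (Ioc 0 1) μ)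
    (h₁ : IntegrableOn f (Ioc 1 T) μ) : IntegrableOn f (Ioc 0 T) μ :=
  (h₀.union h₁).mono_set fun x hx => by
    rcases le_or_gt x 1 with h | h
    exacts [Or.inl ⟨hx.1, h⟩, Or.inr ⟨h, hx.2⟩]

end Integrability

lemma mTail_nonneg (m : Measure ℝ) (x : ℝ) : 0 ≤ mTail m x := ENNReal.toReal_nonneg

section Tail

variable {m : Measure ℝ}

lemma antitoneOn_mTail (hm : ∀ x : ℝ, 0 < x → m (Ioi x) < ⊤) :
    AntitoneOn (mTail m) (Ioi 0) := fun x hx _ _ hxy =>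
  ENNReal.toReal_mono (hm x hx).ne (measure_mono (Ioi_subset_Ioi hxy))

lemma measureReal_Ioc_eq_mTail_sub (hm : ∀ x : ℝ, 0 < x → m (Ioi x) < ⊤) {a b : ℝ}
    (ha : 0 < a) (hab : a ≤ b) : m.real (Ioc a b) = mTail m a - mTail m b := by
  rw [← Ioi_sdiff_Ioi, measureReal_sdiff (Ioi_subset_Ioi hab) measurableSet_Ioi (hm a ha).ne]
  rfl

lemma integrableOn_mTail (hm : ∀ x : ℝ, 0 < x → m (Ioi x) < ⊤)
    (hmint : IntegrableOn (mTail m) (Ioc 0 1)) (T : ℝ) :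
    IntegrableOn (mTail m) (Ioc 0 T) :=
  integrableOn_Ioc_zero_of_Ioc_one hmint <| integrableOn_Ioc_of_antitoneOn
    ((antitoneOn_mTail hm).mono fun _ hx => one_pos.trans_le hx.1) (by simp)

end Tail

noncomputable def tailPrimitive (m : Measure ℝ) (z : ℝ) : ℝ := ∫ w in (0:ℝ)..z, mTail m w

noncomputable def tailPrimitiveIntegral (m : Measure ℝ) (γ y : ℝ) : ℝ :=
  ∫ z in Ioc y γ, tailPrimitive m z ∂m

noncomputable def NNIntegrand (m : Measure ℝ) (γ x : ℝ) : ℝ :=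
  ∫ y in Ioc 0 x, tailPrimitiveIntegral m γ y

lemma NN_eq_integral_NNIntegrand (m j : Measure ℝ) (γ : ℝ) :
    NN m j γ = ∫ x in Ioc 0 γ, NNIntegrand m γ x ∂j :=
  setIntegral_congr_fun measurableSet_Ioc fun x hx => by
    rw [intervalIntegral.integral_of_le hx.1.le]
    rfl

section Primitive

variable {m : Measure ℝ}

lemma tailPrimitive_eq {z : ℝ} (hz : 0 ≤ z) :
    tailPrimitive m z = ∫ w in Ioc 0 z, mTail m w :=
  intervalIntegral.integral_of_le hz

lemma tailPrimitive_nonneg {z : ℝ} (hz : 0 ≤ z) : 0 ≤ tailPrimitive m z := by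
  rw [tailPrimitive_eq hz]
  exact setIntegral_nonneg measurableSet_Ioc fun w _ => mTail_nonneg m w

lemma tailPrimitiveIntegral_nonneg {γ y : ℝ} (hy : 0 ≤ y) : 0 ≤ tailPrimitiveIntegral m γ y :=
  setIntegral_nonneg measurableSet_Ioc fun _ hz => tailPrimitive_nonneg (hy.trans hz.1.le)

lemma NNIntegrand_nonneg (γ x : ℝ) : 0 ≤ NNIntegrand m γ x :=
  setIntegral_nonneg measurableSet_Ioc fun _ hy => tailPrimitiveIntegral_nonneg hy.1.le

variable (hm : ∀ x : ℝ, 0 < x → m (Ioi x) < ⊤) (hmint : IntegrableOn (mTail m) (Ioc 0 1))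
include hm hmint

lemma monotoneOn_tailPrimitive : MonotoneOn (tailPrimitive m) (Ici 0) := by
  intro x hx y hy hxy
  rw [tailPrimitive_eq hx, tailPrimitive_eq hy]
  exact setIntegral_mono_set (integrableOn_mTail hm hmint y)
    (.of_forall fun w => mTail_nonneg m w) (Ioc_subset_Ioc_right hxy).eventuallyLE

lemma mul_mTail_le_tailPrimitive {z : ℝ} (hz : 0 < z) : z * mTail m z ≤ tailPrimitive m z := by
  have h := setIntegral_ge_of_const_le_real measurableSet_Ioc (by simp)
    (fun w hw => antitoneOn_mTail hm hw.1 hz hw.2) (integrableOn_mTail hm hmint z)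
  rwa [Real.volume_real_Ioc_of_le hz.le, sub_zero, mul_comm, ← tailPrimitive_eq hz.le] at h

lemma integrableOn_tailPrimitive {γ y : ℝ} (hy : 0 < y) :
    IntegrableOn (tailPrimitive m) (Ioc y γ) m :=
  integrableOn_Ioc_of_monotoneOn
    ((monotoneOn_tailPrimitive hm hmint).mono fun _ hz => hy.le.trans hz.1)
    (measure_mono Ioc_subset_Ioi_self |>.trans_lt (hm y hy)).ne

lemma antitoneOn_tailPrimitiveIntegral (γ : ℝ) :
    AntitoneOn (tailPrimitiveIntegral m γ) (Ioi 0) := fun _ hy₁ _ _ h =>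
  setIntegral_mono_set (integrableOn_tailPrimitive hm hmint hy₁)
    (ae_restrict_of_forall_mem measurableSet_Ioc fun _ hz =>
      tailPrimitive_nonneg (le_of_lt (lt_trans hy₁ hz.1)))
    (Ioc_subset_Ioc_left h).eventuallyLE

lemma tailPrimitiveIntegral_le {γ y : ℝ} (hγ : 0 ≤ γ) (hy : 0 < y) :
    tailPrimitiveIntegral m γ y ≤ tailPrimitive m γ * mTail m y := by
  have hfin : m (Ioc y γ) ≠ ⊤ := (measure_mono Ioc_subset_Ioi_self |>.trans_lt (hm y hy)).ne
  calc tailPrimitiveIntegral m γ y ≤ ∫ _ in Ioc y γ, tailPrimitive m γ ∂m :=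
        setIntegral_mono_on (integrableOn_tailPrimitive hm hmint hy) (integrableOn_const hfin)
          measurableSet_Ioc fun z hz =>
            monotoneOn_tailPrimitive hm hmint (hy.trans hz.1).le hγ hz.2
    _ = tailPrimitive m γ * m.real (Ioc y γ) := by rw [setIntegral_const, smul_eq_mul, mul_comm]
    _ ≤ tailPrimitive m γ * mTail m y :=
        mul_le_mul_of_nonneg_left (ENNReal.toReal_mono (hm y hy).ne
          (measure_mono Ioc_subset_Ioi_self)) (tailPrimitive_nonneg hγ)

lemma le_tailPrimitiveIntegral {γ y a b : ℝ} (hy : 0 < y) (hya : y ≤ a) (hab : a ≤ b)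
    (hbγ : b ≤ γ) :
    tailPrimitive m a * (mTail m a - mTail m b) ≤ tailPrimitiveIntegral m γ y := by
  have ha : 0 < a := hy.trans_le hya
  calc tailPrimitive m a * (mTail m a - mTail m b)
      = tailPrimitive m a * m.real (Ioc a b) := by rw [measureReal_Ioc_eq_mTail_sub hm ha hab]
    _ ≤ ∫ z in Ioc a b, tailPrimitive m z ∂m :=
        setIntegral_ge_of_const_le_real measurableSet_Ioc
          (measure_mono Ioc_subset_Ioi_self |>.trans_lt (hm a ha)).ne
          (fun z hz => monotoneOn_tailPrimitive hm hmint ha.le (ha.trans hz.1).le hz.1.le)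
          (integrableOn_tailPrimitive hm hmint ha)
    _ ≤ tailPrimitiveIntegral m γ y :=
        setIntegral_mono_set (integrableOn_tailPrimitive hm hmint hy)
          (ae_restrict_of_forall_mem measurableSet_Ioc fun _ hz =>
            tailPrimitive_nonneg (hy.trans hz.1).le)
          (Ioc_subset_Ioc hya hbγ).eventuallyLE

lemma integrableOn_tailPrimitiveIntegral {γ : ℝ} (hγ : 0 ≤ γ) (x : ℝ) :
    IntegrableOn (tailPrimitiveIntegral m γ) (Ioc 0 x) := by
  refine Integrable.mono' ((integrableOn_mTail hm hmint x).const_mul (tailPrimitive m γ))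
    (aemeasurable_restrict_of_antitoneOn measurableSet_Ioc
      ((antitoneOn_tailPrimitiveIntegral hm hmint γ).mono fun _ hy => hy.1)).aestronglyMeasurable
    (ae_restrict_of_forall_mem measurableSet_Ioc fun y hy => ?_)
  rw [Real.norm_of_nonneg (tailPrimitiveIntegral_nonneg hy.1.le)]
  exact tailPrimitiveIntegral_le hm hmint hγ hy.1

lemma monotone_NNIntegrand {γ : ℝ} (hγ : 0 ≤ γ) : Monotone (NNIntegrand m γ) := fun _ x h =>
  setIntegral_mono_set (integrableOn_tailPrimitiveIntegral hm hmint hγ x)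
    (ae_restrict_of_forall_mem measurableSet_Ioc fun _ hy => tailPrimitiveIntegral_nonneg hy.1.le)
    (Ioc_subset_Ioc_right h).eventuallyLE

lemma NNIntegrand_le {γ x : ℝ} (hγ : 0 ≤ γ) (hx : 0 ≤ x) :
    NNIntegrand m γ x ≤ tailPrimitive m γ * tailPrimitive m x := by
  calc NNIntegrand m γ x ≤ ∫ y in Ioc 0 x, tailPrimitive m γ * mTail m y :=
        setIntegral_mono_on (integrableOn_tailPrimitiveIntegral hm hmint hγ x)
          ((integrableOn_mTail hm hmint x).const_mul _) measurableSet_Ioc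
          fun y hy => tailPrimitiveIntegral_le hm hmint hγ hy.1
    _ = tailPrimitive m γ * tailPrimitive m x := by
        rw [integral_const_mul, tailPrimitive_eq hx]

lemma le_NNIntegrand {γ u v b x : ℝ} (hu : 0 < u) (huv : u ≤ v) (hvb : v ≤ b) (hbγ : b ≤ γ)
    (hvx : v ≤ x) :
    (v - u) * (tailPrimitive m v * (mTail m v - mTail m b)) ≤ NNIntegrand m γ x := by
  have hγ : 0 ≤ γ := hu.le.trans (huv.trans (hvb.trans hbγ))
  calc (v - u) * (tailPrimitive m v * (mTail m v - mTail m b))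
      = tailPrimitive m v * (mTail m v - mTail m b) * volume.real (Ioc u v) := by
        rw [Real.volume_real_Ioc_of_le huv, mul_comm]
    _ ≤ ∫ y in Ioc u v, tailPrimitiveIntegral m γ y :=
        setIntegral_ge_of_const_le_real measurableSet_Ioc (by simp)
          (fun y hy => le_tailPrimitiveIntegral hm hmint (hu.trans hy.1) hy.2 hvb hbγ)
          ((integrableOn_tailPrimitiveIntegral hm hmint hγ x).mono_set
            (Ioc_subset_Ioc hu.le hvx))
    _ ≤ NNIntegrand m γ x :=
        setIntegral_mono_set (integrableOn_tailPrimitiveIntegral hm hmint hγ x)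
          (ae_restrict_of_forall_mem measurableSet_Ioc fun _ hy =>
            tailPrimitiveIntegral_nonneg hy.1.le)
          (Ioc_subset_Ioc hu.le hvx).eventuallyLE

end Primitive

section Kernel

variable {m j : Measure ℝ} (hm : ∀ x : ℝ, 0 < x → m (Ioi x) < ⊤)
  (hmint : IntegrableOn (mTail m) (Ioc 0 1)) (hj : ∀ x : ℝ, 0 < x → j (Ioi x) < ⊤)
  (hjmint : ∫⁻ x in Ioc (0:ℝ) 1, ENNReal.ofReal (∫ y in (0:ℝ)..x, mTail m y) ∂j < ⊤)
include hm hmint hj hjmint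

lemma integrableOn_tailPrimitive_Ioc_zero (γ : ℝ) :
    IntegrableOn (tailPrimitive m) (Ioc 0 γ) j := by
  have hmono := monotoneOn_tailPrimitive hm hmint
  refine integrableOn_Ioc_zero_of_Ioc_one ⟨?_, ?_⟩ (integrableOn_Ioc_of_monotoneOn
    (hmono.mono fun _ hx => zero_le_one.trans hx.1)
    (measure_mono Ioc_subset_Ioi_self |>.trans_lt (hj 1 one_pos)).ne)
  · exact (aemeasurable_restrict_of_monotoneOn measurableSet_Ioc
      (hmono.mono fun _ hx => hx.1.le)).aestronglyMeasurable
  · rw [hasFiniteIntegral_iff_ofReal (ae_restrict_of_forall_mem measurableSet_Ioc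
      fun _ hx => tailPrimitive_nonneg hx.1.le)]
    exact hjmint

lemma integrableOn_NNIntegrand {γ : ℝ} (hγ : 0 ≤ γ) :
    IntegrableOn (NNIntegrand m γ) (Ioc 0 γ) j := by
  refine Integrable.mono' ((integrableOn_tailPrimitive_Ioc_zero hm hmint hj hjmint γ).const_mul
    (tailPrimitive m γ)) (monotone_NNIntegrand hm hmint hγ).measurable.aestronglyMeasurable
    (ae_restrict_of_forall_mem measurableSet_Ioc fun x hx => ?_)
  rw [Real.norm_of_nonneg (NNIntegrand_nonneg γ x)]
  exact NNIntegrand_le hm hmint hγ hx.1.le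

end Kernel

noncomputable def blockBound (m j : Measure ℝ) (a : ℝ) : ℝ :=
  a * (2 * a * mTail m (2 * a)) * (mTail m (2 * a) - mTail m (4 * a))
    * (mTail j (4 * a) - mTail j (8 * a))

lemma blockBound_le_integral {m j : Measure ℝ} (hm : ∀ x : ℝ, 0 < x → m (Ioi x) < ⊤)
    (hmint : IntegrableOn (mTail m) (Ioc 0 1)) (hj : ∀ x : ℝ, 0 < x → j (Ioi x) < ⊤)
    (hjmint : ∫⁻ x in Ioc (0:ℝ) 1, ENNReal.ofReal (∫ y in (0:ℝ)..x, mTail m y) ∂j < ⊤)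
    {γ a : ℝ} (ha : 0 < a) (haγ : 8 * a ≤ γ) :
    blockBound m j a ≤ ∫ x in Ioc (4 * a) (8 * a), NNIntegrand m γ x ∂j := by
  have hΔ : 0 ≤ mTail m (2 * a) - mTail m (4 * a) :=
    sub_nonneg.2 (antitoneOn_mTail hm (by simp; positivity) (by simp; positivity) (by linarith))
  have hpoint : ∀ x ∈ Ioc (4 * a) (8 * a),
      a * (2 * a * mTail m (2 * a)) * (mTail m (2 * a) - mTail m (4 * a))
        ≤ NNIntegrand m γ x := fun x hx =>
    calc a * (2 * a * mTail m (2 * a)) * (mTail m (2 * a) - mTail m (4 * a))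
        = a * (2 * a * mTail m (2 * a) * (mTail m (2 * a) - mTail m (4 * a))) := by ring
      _ ≤ a * (tailPrimitive m (2 * a) * (mTail m (2 * a) - mTail m (4 * a))) := by
          gcongr
          exact mul_mTail_le_tailPrimitive hm hmint (by positivity)
      _ = (2 * a - a) * (tailPrimitive m (2 * a) * (mTail m (2 * a) - mTail m (4 * a))) := by
          ring
      _ ≤ NNIntegrand m γ x :=
          le_NNIntegrand hm hmint ha (by linarith) (by linarith) (by linarith) (by linarith [hx.1])
  calc blockBound m j a
      = a * (2 * a * mTail m (2 * a)) * (mTail m (2 * a) - mTail m (4 * a))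
          * j.real (Ioc (4 * a) (8 * a)) := by
        rw [measureReal_Ioc_eq_mTail_sub hj (by positivity) (by linarith), blockBound]
    _ ≤ ∫ x in Ioc (4 * a) (8 * a), NNIntegrand m γ x ∂j :=
        setIntegral_ge_of_const_le_real measurableSet_Ioc
          (measure_mono Ioc_subset_Ioi_self |>.trans_lt (hj _ (by positivity))).ne hpoint
          ((integrableOn_NNIntegrand hm hmint hj hjmint (by linarith)).mono_set
            (Ioc_subset_Ioc (by positivity) haγ))

lemma sum_setIntegral_le_setIntegral {X ι : Type*} [MeasurableSpace X] {μ : Measure X}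
    {f : X → ℝ} {s : Set X} (t : Finset ι) {S : ι → Set X} (hS : ∀ i ∈ t, MeasurableSet (S i))
    (hdisj : Set.Pairwise ↑t (Function.onFun Disjoint S)) (hsub : ∀ i ∈ t, S i ⊆ s)
    (hs : MeasurableSet s)
    (hf : IntegrableOn f s μ) (hf0 : ∀ x ∈ s, 0 ≤ f x) :
    ∑ i ∈ t, ∫ x in S i, f x ∂μ ≤ ∫ x in s, f x ∂μ := by
  rw [← integral_biUnion_finset t hS hdisj fun i hi => hf.mono_set (hsub i hi)]
  exact setIntegral_mono_set hf (ae_restrict_of_forall_mem hs hf0)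
    (iUnion₂_subset hsub).eventuallyLE

section RegularVariation

variable {f ℓ : ℝ → ℝ} {c p : ℝ}

lemma tendsto_comp_const_mul_div (hf : Tendsto (fun x => f x / (x ^ p * ℓ x)) atTop (𝓝 c))
    (hℓ : SlowlyVarying ℓ) (hℓpos : ∀ x : ℝ, 0 < x → 0 < ℓ x) {a : ℝ} (ha : 0 < a) :
    Tendsto (fun γ => f (a * γ) / (γ ^ p * ℓ γ)) atTop (𝓝 (c * a ^ p)) := by
  have h := ((hf.comp (tendsto_id.const_mul_atTop ha)).mul (hℓ a ha)).mul_const (a ^ p)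
  rw [mul_one] at h
  refine h.congr' ?_
  filter_upwards [eventually_gt_atTop 0] with γ hγ
  have := (hℓpos _ (mul_pos ha hγ)).ne'
  have := (hℓpos γ hγ).ne'
  have := (Real.rpow_pos_of_pos ha p).ne'
  have := (Real.rpow_pos_of_pos hγ p).ne'
  simp only [Function.comp_apply, id, Real.mul_rpow ha.le hγ.le]
  field_simp

lemma tendsto_sub_comp_const_mul_div (hf : Tendsto (fun x => f x / (x ^ p * ℓ x)) atTop (𝓝 c))
    (hℓ : SlowlyVarying ℓ) (hℓpos : ∀ x : ℝ, 0 < x → 0 < ℓ x) {a b : ℝ} (ha : 0 < a)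
    (hb : 0 < b) :
    Tendsto (fun γ => (f (a * γ) - f (b * γ)) / (γ ^ p * ℓ γ)) atTop
      (𝓝 (c * a ^ p - c * b ^ p)) :=
  ((tendsto_comp_const_mul_div hf hℓ hℓpos ha).sub
    (tendsto_comp_const_mul_div hf hℓ hℓpos hb)).congr fun _ => (sub_div _ _ _).symm

end RegularVariation

lemma sq_mul_rpow_mul_rpow_mul_rpow {x p q : ℝ} (hx : 0 < x) (hpq : 2 + 2 * p + q = 0) :
    x ^ 2 * (x ^ p * x ^ p * x ^ q) = 1 := by
  rw [← Real.rpow_add hx, ← Real.rpow_add hx, ← Real.rpow_natCast, ← Real.rpow_add hx]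
  convert Real.rpow_zero x using 2
  push_cast
  linarith

section Blocks

variable {K L : ℝ → ℝ} {m j : Measure ℝ} {c p q : ℝ}
  (hKpos : ∀ x : ℝ, 0 < x → 0 < K x) (hLpos : ∀ x : ℝ, 0 < x → 0 < L x)
  (hKsv : SlowlyVarying K) (hLsv : SlowlyVarying L)
  (hmreg : Tendsto (fun x => mTail m x / (x ^ p * K x)) atTop (𝓝 c))
  (hjreg : Tendsto (fun x => mTail j x / (x ^ q * L x)) atTop (𝓝 1))
include hKpos hLpos hKsv hLsv hmreg hjreg

lemma tendsto_blockBound_div (hpq : 2 + 2 * p + q = 0) {u : ℝ} (hu : 0 < u) :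
    Tendsto (fun γ => blockBound m j (u * γ) / (K γ ^ 2 * L γ)) atTop
      (𝓝 (2 * c ^ 2 * 2 ^ p * (2 ^ p - 4 ^ p) * (4 ^ q - 8 ^ q))) := by
  have h2 : (0:ℝ) < 2 * u := by positivity
  have h4 : (0:ℝ) < 4 * u := by positivity
  have h8 : (0:ℝ) < 8 * u := by positivity
  have hlim := (((tendsto_comp_const_mul_div hmreg hKsv hKpos h2).mul
    (tendsto_sub_comp_const_mul_div hmreg hKsv hKpos h2 h4)).mul
    (tendsto_sub_comp_const_mul_div hjreg hLsv hLpos h4 h8)).const_mul (2 * u ^ 2)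
  have hκ : 2 * u ^ 2 * (c * (2 * u) ^ p * (c * (2 * u) ^ p - c * (4 * u) ^ p)
      * (1 * (4 * u) ^ q - 1 * (8 * u) ^ q))
      = 2 * c ^ 2 * 2 ^ p * (2 ^ p - 4 ^ p) * (4 ^ q - 8 ^ q) := by
    simp only [Real.mul_rpow (by norm_num : (0:ℝ) ≤ 2) hu.le,
      Real.mul_rpow (by norm_num : (0:ℝ) ≤ 4) hu.le, Real.mul_rpow (by norm_num : (0:ℝ) ≤ 8) hu.le]
    linear_combination (2 * c ^ 2 * 2 ^ p * (2 ^ p - 4 ^ p) * (4 ^ q - 8 ^ q))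
      * sq_mul_rpow_mul_rpow_mul_rpow hu hpq
  rw [← hκ]
  refine hlim.congr' ?_
  filter_upwards [eventually_gt_atTop 0] with γ hγ
  have hγ2 : γ ^ 2 = (γ ^ p * γ ^ p * γ ^ q)⁻¹ :=
    eq_inv_of_mul_eq_one_left (sq_mul_rpow_mul_rpow_mul_rpow hγ hpq)
  calc _ = 2 * u ^ 2 * (γ ^ p * γ ^ p * γ ^ q)⁻¹ * (mTail m (2 * u * γ)
        * (mTail m (2 * u * γ) - mTail m (4 * u * γ)) * (mTail j (4 * u * γ) - mTail j (8 * u * γ)))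
        / (K γ ^ 2 * L γ) := by ring
    _ = _ := by rw [← hγ2, blockBound]; ring_nf

lemma exists_eventually_le_integral_block (hm : ∀ x : ℝ, 0 < x → m (Ioi x) < ⊤)
    (hmint : IntegrableOn (mTail m) (Ioc 0 1)) (hj : ∀ x : ℝ, 0 < x → j (Ioi x) < ⊤)
    (hjmint : ∫⁻ x in Ioc (0:ℝ) 1, ENNReal.ofReal (∫ y in (0:ℝ)..x, mTail m y) ∂j < ⊤)
    (hc : 0 < c) (hp : p < 0) (hq : q < 0) (hpq : 2 + 2 * p + q = 0) :
    ∃ κ > 0, ∀ u : ℝ, 0 < u → 8 * u ≤ 1 → ∀ᶠ γ in atTop,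
      κ * (K γ ^ 2 * L γ) ≤ ∫ x in Ioc (4 * (u * γ)) (8 * (u * γ)), NNIntegrand m γ x ∂j := by
  have h24 : (4:ℝ) ^ p < 2 ^ p := Real.rpow_lt_rpow_of_neg (by norm_num) (by norm_num) hp
  have h48 : (8:ℝ) ^ q < 4 ^ q := Real.rpow_lt_rpow_of_neg (by norm_num) (by norm_num) hq
  have hκ : 0 < 2 * c ^ 2 * 2 ^ p * (2 ^ p - 4 ^ p) * (4 ^ q - 8 ^ q) := by
    have := Real.rpow_pos_of_pos (two_pos (α := ℝ)) p
    have := sub_pos.2 h24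
    have := sub_pos.2 h48
    positivity
  refine ⟨_, half_pos hκ, fun u hu hu1 => ?_⟩
  have hlim := tendsto_blockBound_div hKpos hLpos hKsv hLsv hmreg hjreg hpq hu
  filter_upwards [hlim.eventually_const_lt (half_lt_self hκ), eventually_gt_atTop 0]
    with γ hγblock hγ
  have hKL : 0 < K γ ^ 2 * L γ := by have := hKpos γ hγ; have := hLpos γ hγ; positivity
  calc _ ≤ blockBound m j (u * γ) := (lt_div_iff₀ hKL).1 hγblock |>.le
    _ ≤ _ := blockBound_le_integral hm hmint hj hjmint (by positivity) (by nlinarith)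

end Blocks

lemma tendsto_NN_div_atTop {m j : Measure ℝ} {g : ℝ → ℝ} {κ : ℝ}
    (hm : ∀ x : ℝ, 0 < x → m (Ioi x) < ⊤) (hmint : IntegrableOn (mTail m) (Ioc 0 1))
    (hj : ∀ x : ℝ, 0 < x → j (Ioi x) < ⊤)
    (hjmint : ∫⁻ x in Ioc (0:ℝ) 1, ENNReal.ofReal (∫ y in (0:ℝ)..x, mTail m y) ∂j < ⊤)
    (hκ : 0 < κ) (hg : ∀ᶠ γ in atTop, 0 < g γ)
    (hblock : ∀ u : ℝ, 0 < u → 8 * u ≤ 1 → ∀ᶠ γ in atTop,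
      κ * g γ ≤ ∫ x in Ioc (4 * (u * γ)) (8 * (u * γ)), NNIntegrand m γ x ∂j) :
    Tendsto (fun γ => NN m j γ / g γ) atTop atTop := by
  refine tendsto_atTop.2 fun b => ?_
  obtain ⟨M, hM⟩ := exists_nat_gt (b / κ)
  have hblocks : ∀ᶠ γ in atTop, ∀ k ∈ Finset.range M,
      κ * g γ ≤ ∫ x in Ioc (γ * (1 / 2) ^ (k + 1)) (γ * (1 / 2) ^ k), NNIntegrand m γ x ∂j := by
    refine (eventually_all_finset _).2 fun k _ => ?_
    filter_upwards [hblock ((1 / 2) ^ k / 8) (by positivity)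
      (by rw [mul_div_cancel₀ _ (by norm_num)]; exact pow_le_one₀ (by norm_num) (by norm_num))]
      with γ hγ
    have hS : Ioc (4 * ((1 / 2) ^ k / 8 * γ)) (8 * ((1 / 2) ^ k / 8 * γ))
        = Ioc (γ * (1 / 2) ^ (k + 1)) (γ * (1 / 2) ^ k) := by
      congr 1 <;> ring
    rwa [hS] at hγ
  filter_upwards [hblocks, hg, eventually_ge_atTop 0] with γ hγblocks hgγ hγ
  have hanti : Antitone fun k : ℕ => γ * (1 / 2) ^ k := fun _ _ h =>
    mul_le_mul_of_nonneg_left (pow_le_pow_of_le_one (by norm_num) (by norm_num) h) hγ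
  have hsum := sum_setIntegral_le_setIntegral (μ := j) (s := Ioc 0 γ)
    (S := fun k => Ioc (γ * (1 / 2) ^ (k + 1)) (γ * (1 / 2) ^ k)) (Finset.range M)
    (fun _ _ => measurableSet_Ioc)
    (by simpa only [Order.succ_eq_add_one] using hanti.pairwise_disjoint_on_Ioc_succ.set_pairwise _)
    (fun k _ => Ioc_subset_Ioc (by positivity)
      (mul_le_of_le_one_right hγ (pow_le_one₀ (by norm_num) (by norm_num))))
    measurableSet_Ioc (integrableOn_NNIntegrand hm hmint hj hjmint hγ)
    (fun x _ => NNIntegrand_nonneg γ x)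
  rw [← NN_eq_integral_NNIntegrand] at hsum
  have hMκ : M * (κ * g γ) ≤ NN m j γ := by
    simpa using (Finset.sum_le_sum hγblocks).trans hsum
  rw [le_div_iff₀ hgγ]
  calc b * g γ ≤ M * κ * g γ := by
        gcongr
        exact ((div_lt_iff₀ hκ).1 hM).le
    _ ≤ NN m j γ := by linarith

theorem stmt19_general (α : ℝ) (hα : 2 ≤ α) (K L : ℝ → ℝ)
    (hKpos : ∀ x : ℝ, 0 < x → 0 < K x) (hLpos : ∀ x : ℝ, 0 < x → 0 < L x)
    (hKsv : SlowlyVarying K) (hLsv : SlowlyVarying L)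
    (m j : Measure ℝ)
    (hmfin : ∀ x : ℝ, 0 < x → m (Set.Ioi x) < ⊤)
    (hjfin : ∀ x : ℝ, 0 < x → j (Set.Ioi x) < ⊤)
    (hmint : IntegrableOn (mTail m) (Set.Ioc (0:ℝ) 1) MeasureTheory.volume)
    (hjmint : ∫⁻ x in Set.Ioc (0:ℝ) 1,
        ENNReal.ofReal (∫ y in (0:ℝ)..x, mTail m y) ∂j < ⊤)
    (hmasymp : Tendsto (fun x : ℝ => mTail m x / ((α - 1)⁻¹ * x ^ (1 / α - 1) * K x))
      atTop (nhds 1))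
    (hjasymp : Tendsto (fun x : ℝ => mTail j x / (x ^ (-(2 / α)) * L x))
      atTop (nhds 1)) :
    Tendsto (fun γ => K γ ^ 2 * L γ / NN m j γ) atTop (nhds 0) := by
  have hc : 0 < (α - 1)⁻¹ := inv_pos.2 (by linarith)
  have hp : 1 / α - 1 < 0 := by rw [sub_neg, div_lt_one (by linarith)]; linarith
  have hq : -(2 / α) < 0 := neg_neg_of_pos (by positivity)
  have hpq : 2 + 2 * (1 / α - 1) + -(2 / α) = 0 := by ring
  have hmreg : Tendsto (fun x => mTail m x / (x ^ (1 / α - 1) * K x)) atTop (𝓝 (α - 1)⁻¹) := by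
    refine (one_mul (α - 1)⁻¹ ▸ hmasymp.mul_const (α - 1)⁻¹).congr fun x => ?_
    rw [mul_assoc, div_mul_eq_mul_div, mul_comm, mul_div_mul_left _ _ hc.ne']
  obtain ⟨κ, hκ, hblock⟩ := exists_eventually_le_integral_block hKpos hLpos hKsv hLsv hmreg
    hjasymp hmfin hmint hjfin hjmint hc hp hq hpq
  have hKL : ∀ᶠ γ in atTop, 0 < K γ ^ 2 * L γ := (eventually_gt_atTop 0).mono fun γ hγ => by
    have := hKpos γ hγ; have := hLpos γ hγ; positivity
  simpa only [Pi.inv_def, inv_div] using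
    (tendsto_NN_div_atTop hmfin hmint hjfin hjmint hκ hKL hblock).inv_tendsto_atTop

theorem stmt19 (α : ℝ) (hα : 2 ≤ α) (K L : ℝ → ℝ)
    (hKmeas : Measurable K) (hLmeas : Measurable L)
    (hKpos : ∀ x : ℝ, 0 < x → 0 < K x) (hLpos : ∀ x : ℝ, 0 < x → 0 < L x)
    (hKsv : SlowlyVarying K) (hLsv : SlowlyVarying L)
    (m j : Measure ℝ)
    (hmfin : ∀ x : ℝ, 0 < x → m (Set.Ioi x) < ⊤)
    (hjfin : ∀ x : ℝ, 0 < x → j (Set.Ioi x) < ⊤)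
    (hmint : IntegrableOn (mTail m) (Set.Ioc (0:ℝ) 1) MeasureTheory.volume)
    (hjint : ∫⁻ x in Set.Ioc (0:ℝ) 1, ENNReal.ofReal x ∂j < ⊤)
    (hjmint : ∫⁻ x in Set.Ioc (0:ℝ) 1,
        ENNReal.ofReal (∫ y in (0:ℝ)..x, mTail m y) ∂j < ⊤)
    (hmasymp : Tendsto (fun x : ℝ => mTail m x / ((α - 1)⁻¹ * x ^ (1 / α - 1) * K x))
      atTop (nhds 1))
    (hjasymp : Tendsto (fun x : ℝ => mTail j x / (x ^ (-(2 / α)) * L x))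
      atTop (nhds 1))
    (hNinf : Tendsto (NN m j) atTop atTop) :
    Tendsto (fun γ => K γ ^ 2 * L γ / NN m j γ) atTop (nhds 0) :=
  stmt19_general α hα K L hKpos hLpos hKsv hLsv m j hmfin hjfin hmint hjmint hmasymp hjasymp
end
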